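/- For every positive integer m, every natural number k, and all complex numbers x, ξ, y: _mL_k(x,ξ|q) = Σ_{n=0}^{k} [k choose n]_q (ξ ⊖_q y)^{n} · _mL_{k-n}(x,y|q). -/

import Mathlib

/-- The q-analogue of a natural number: [n]_q = Σ_{k=1}^n q^{k-1}. -/
noncomputable def qnat (q : ℝ) (n : ℕ) : ℝ := ∑ k ∈ Finset.range n, q ^ k

/-- The q-factorial [n]_q! = Π_{k=1}^n [k]_q, with [0]_q! = 1. -/
noncomputable def qfact (q : ℝ) (n : ℕ) : ℝ := ∏ k ∈ Finset.range n, qnat q (k + 1)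

/-- The Gaussian q-binomial coefficient [n choose k]_q. -/
noncomputable def qbinom (q : ℝ) (n k : ℕ) : ℝ := qfact q n / (qfact q k * qfact q (n - k))

/-- JHC q-subtraction power (x ⊖_q y)^n. -/
noncomputable def qsubPow (q : ℝ) (x y : ℂ) (n : ℕ) : ℂ :=
  ∑ k ∈ Finset.range (n + 1),
    (qbinom q n k : ℂ) * (q : ℂ) ^ (k * (k - 1) / 2) * x ^ (n - k) * (-y) ^ k

/-- JHC q-addition power (x ⊕_q y)^n. -/
noncomputable def qaddPow (q : ℝ) (x y : ℂ) (n : ℕ) : ℂ :=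
  ∑ k ∈ Finset.range (n + 1),
    (qbinom q n k : ℂ) * (q : ℂ) ^ (k * (k - 1) / 2) * x ^ (n - k) * y ^ k

/-- The q-deformed 2D Laguerre polynomial _mL_n(x,y|q). -/
noncomputable def qLag (q : ℝ) (m : ℕ) (x y : ℂ) (n : ℕ) : ℂ :=
  (qfact q n : ℂ) * ∑ k ∈ Finset.range (n / m + 1),
    (q : ℂ) ^ (m * (k * (k - 1) / 2)) * x ^ k * y ^ (n - m * k) /
      ((qfact (q ^ m) k : ℂ) ^ 2 * (qfact q (n - m * k) : ℂ))

/-- The q-deformed Laguerre-Gould-Hopper polynomial _LH_n^{(m,s)}(x,y,z|q). -/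
noncomputable def qLGH (q : ℝ) (m s : ℕ) (x y z : ℂ) (n : ℕ) : ℂ :=
  (qfact q n : ℂ) * ∑ k ∈ Finset.range (n / s + 1),
    (q : ℂ) ^ (s * (k * (k - 1) / 2)) * z ^ k * qLag q m x y (n - s * k) /
      ((qfact (q ^ s) k : ℂ) * (qfact q (n - s * k) : ℂ))

/-- The two-variable q-Gould-Hopper kernel G_n^s(u,v). -/
noncomputable def qGH (q : ℝ) (s : ℕ) (u v : ℂ) (n : ℕ) : ℂ :=
  (qfact q n : ℂ) * ∑ k ∈ Finset.range (n / s + 1),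
    (q : ℂ) ^ (s * (k * (k - 1) / 2)) * u ^ (n - s * k) * v ^ k /
      ((qfact q (n - s * k) : ℂ) * (qfact (q ^ s) k : ℂ))

/-- The kernel G_n^s(ξ ⊖_q y, ζ ⊖_q z), with monomial powers replaced by
JHC q-subtraction powers. -/
noncomputable def qGHsub (q : ℝ) (s : ℕ) (ξ y ζ z : ℂ) (n : ℕ) : ℂ :=
  (qfact q n : ℂ) * ∑ k ∈ Finset.range (n / s + 1),
    (q : ℂ) ^ (s * (k * (k - 1) / 2)) * qsubPow q ξ y (n - s * k) * qsubPow q ζ z k /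
      ((qfact q (n - s * k) : ℂ) * (qfact (q ^ s) k : ℂ))


/-! Both sides are instances of one identity for the q-Appell sequences
`P_n(y) = [n]_q! Σ_j a_j y^(n - m j) / [n - m j]_q!`; for `_mL_n(x, · | q)` the coefficients are
`a_j = q^(m j(j-1)/2) x^j / ([j]_{q^m}!)^2`. Exchanging the sums over `n` and `j` reduces it to the
inversion formula `Σ_n [N choose n]_q (ξ ⊖_q y)^n y^(N-n) = ξ^N`. Expanding the q-subtraction
powers and regrouping with `[N choose j+i]_q [j+i choose i]_q = [N choose j]_q [N-j choose i]_q`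
turns its left side into `Σ_j [N choose j]_q ξ^j (y ⊖_q y)^(N-j)`, and `(y ⊖_q y)^M = 0` for
`M > 0` because the alternating sum `Σ_i (-1)^i q^(i(i-1)/2) [M choose i]_q` telescopes by
q-Pascal. -/

open Finset

section QFactorial

variable {q : ℝ}

lemma qnat_pos (hq : 0 < q) {n : ℕ} (hn : 0 < n) : 0 < qnat q n :=
  sum_pos (fun i _ => pow_pos hq i) (nonempty_range_iff.mpr hn.ne')

lemma qnat_add (q : ℝ) (a b : ℕ) : qnat q (a + b) = qnat q a + q ^ a * qnat q b := by
  simp only [qnat, sum_range_add, mul_sum, pow_add]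

@[simp]
lemma qfact_zero (q : ℝ) : qfact q 0 = 1 := prod_range_zero _

lemma qfact_succ (q : ℝ) (n : ℕ) : qfact q (n + 1) = qfact q n * qnat q (n + 1) :=
  prod_range_succ _ n

lemma qfact_pos (hq : 0 < q) (n : ℕ) : 0 < qfact q n :=
  prod_pos fun i _ => qnat_pos hq i.succ_pos

lemma qbinom_zero_right (hq : 0 < q) (n : ℕ) : qbinom q n 0 = 1 := by
  simp [qbinom, (qfact_pos hq n).ne']

lemma qbinom_self (hq : 0 < q) (n : ℕ) : qbinom q n n = 1 := by
  simp [qbinom, (qfact_pos hq n).ne']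

lemma qbinom_succ_succ (hq : 0 < q) {n i : ℕ} (hi : i < n) :
    qbinom q (n + 1) (i + 1) = qbinom q n i + q ^ (i + 1) * qbinom q n (i + 1) := by
  obtain ⟨r, rfl⟩ : ∃ r, n = i + 1 + r := ⟨n - (i + 1), by omega⟩
  have hsplit : qnat q (i + 1 + r + 1) = qnat q (i + 1) + q ^ (i + 1) * qnat q (r + 1) := by
    rw [← qnat_add, add_assoc]
  simp only [qbinom, show i + 1 + r + 1 - (i + 1) = r + 1 by omega,
    show i + 1 + r - i = r + 1 by omega, show i + 1 + r - (i + 1) = r by omega,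
    qfact_succ q (i + 1 + r), qfact_succ q i, qfact_succ q r, hsplit]
  have := (qfact_pos hq i).ne'
  have := (qfact_pos hq r).ne'
  have := (qnat_pos hq (n := i + 1) i.succ_pos).ne'
  have := (qnat_pos hq (n := r + 1) r.succ_pos).ne'
  field_simp

lemma qbinom_mul_qbinom_add (hq : 0 < q) (N j i : ℕ) :
    qbinom q N (j + i) * qbinom q (j + i) i = qbinom q N j * qbinom q (N - j) i := by
  simp only [qbinom, Nat.add_sub_cancel, show N - j - i = N - (j + i) by omega]
  have := (qfact_pos hq (j + i)).ne'
  have := (qfact_pos hq (N - j)).ne'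
  have := (qfact_pos hq i).ne'
  have := (qfact_pos hq j).ne'
  have := (qfact_pos hq (N - (j + i))).ne'
  field_simp

lemma qbinom_mul_qfact_div_qfact (hq : 0 < q) (k n t : ℕ) :
    qbinom q k n * qfact q (k - n) / qfact q (k - n - t) =
      qfact q k / qfact q (k - t) * qbinom q (k - t) n := by
  simp only [qbinom, show k - t - n = k - n - t by omega]
  have := (qfact_pos hq n).ne'
  have := (qfact_pos hq (k - n)).ne'
  have := (qfact_pos hq (k - t)).ne'
  have := (qfact_pos hq (k - n - t)).ne'
  field_simp

/-- The telescoping stops at `r = N`: `qbinom q N (N + 1)` is not `0`, by truncated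
subtraction. -/
lemma alternating_sum_range_qbinom_partial (hq : 0 < q) {N r : ℕ} (hr : r ≤ N) :
    ∑ i ∈ range (r + 1), (-1) ^ i * q ^ (i * (i - 1) / 2) * qbinom q (N + 1) i =
      (-1) ^ r * q ^ (r * (r - 1) / 2 + r) * qbinom q N r := by
  induction r with
  | zero => simp [qbinom_zero_right hq]
  | succ r ih =>
    rw [sum_range_succ, ih (by omega), qbinom_succ_succ hq (by omega), Nat.triangle_succ]
    ring

lemma alternating_sum_range_qbinom_of_ne (hq : 0 < q) {M : ℕ} (hM : M ≠ 0) :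
    ∑ i ∈ range (M + 1), (-1) ^ i * q ^ (i * (i - 1) / 2) * qbinom q M i = 0 := by
  obtain ⟨N, rfl⟩ := Nat.exists_eq_succ_of_ne_zero hM
  rw [sum_range_succ, alternating_sum_range_qbinom_partial hq le_rfl, ← Nat.triangle_succ,
    qbinom_self hq, qbinom_self hq]
  ring

end QFactorial

lemma sum_range_triangle_eq_sum_range_sub {M : Type*} [AddCommMonoid M] (N : ℕ)
    (A : ℕ → ℕ → M) :
    ∑ n ∈ range (N + 1), ∑ i ∈ range (n + 1), A n i =
      ∑ j ∈ range (N + 1), ∑ i ∈ range (N - j + 1), A (j + i) i := by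
  rw [sum_sigma', sum_sigma']
  refine sum_nbij' (fun p => ⟨p.1 - p.2, p.2⟩) (fun p => ⟨p.1 + p.2, p.2⟩) ?_ ?_ ?_ ?_ ?_ <;>
    simp only [mem_sigma, mem_range, Sigma.forall, Sigma.mk.injEq, heq_eq_eq, and_true] <;>
    intro a b h
  any_goals omega
  rw [Nat.sub_add_cancel (by omega)]

section QSubPow

variable {q : ℝ}

@[simp]
lemma qsubPow_zero (q : ℝ) (x y : ℂ) : qsubPow q x y 0 = 1 := by
  simp [qsubPow, qbinom]

lemma qsubPow_self (hq : 0 < q) (y : ℂ) {M : ℕ} (hM : M ≠ 0) : qsubPow q y y M = 0 := by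
  have hsum := congrArg (fun r : ℝ => (r : ℂ)) (alternating_sum_range_qbinom_of_ne hq hM)
  push_cast at hsum
  calc qsubPow q y y M = y ^ M *
        ∑ i ∈ range (M + 1), (-1) ^ i * (q : ℂ) ^ (i * (i - 1) / 2) * qbinom q M i := by
        rw [qsubPow, mul_sum]
        refine sum_congr rfl fun i hi => ?_
        have hy : y ^ M = y ^ (M - i) * y ^ i := by
          rw [← pow_add, Nat.sub_add_cancel (Nat.le_of_lt_succ (mem_range.mp hi))]
        rw [hy, neg_pow]
        ring
    _ = 0 := by rw [hsum, mul_zero]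

lemma sum_qbinom_mul_qsubPow_mul_pow (hq : 0 < q) (N : ℕ) (ξ y : ℂ) :
    ∑ n ∈ range (N + 1), (qbinom q N n : ℂ) * qsubPow q ξ y n * y ^ (N - n) = ξ ^ N := by
  let A : ℕ → ℕ → ℂ := fun n i => (qbinom q N n : ℂ) * (qbinom q n i : ℂ) *
    ((q : ℂ) ^ (i * (i - 1) / 2) * ξ ^ (n - i) * (-y) ^ i * y ^ (N - n))
  have hexpand : ∀ n ∈ range (N + 1),
      (qbinom q N n : ℂ) * qsubPow q ξ y n * y ^ (N - n) = ∑ i ∈ range (n + 1), A n i := by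
    intro n _
    rw [qsubPow, mul_sum, sum_mul]
    exact sum_congr rfl fun i _ => by ring
  have hregroup : ∀ j ∈ range (N + 1), ∑ i ∈ range (N - j + 1), A (j + i) i =
      (qbinom q N j : ℂ) * ξ ^ j * qsubPow q y y (N - j) := by
    intro j _
    rw [qsubPow, mul_sum]
    refine sum_congr rfl fun i hi => ?_
    have hrev : (qbinom q N (j + i) : ℂ) * qbinom q (j + i) i =
        qbinom q N j * qbinom q (N - j) i := by
      exact_mod_cast qbinom_mul_qbinom_add hq N j i
    simp only [A, hrev, Nat.add_sub_cancel, show N - (j + i) = N - j - i by omega]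
    ring
  rw [sum_congr rfl hexpand, sum_range_triangle_eq_sum_range_sub, sum_congr rfl hregroup,
    sum_eq_single_of_mem N (self_mem_range_succ N) fun j hj hjN => by
      rw [qsubPow_self hq y (by have := mem_range.mp hj; omega), mul_zero]]
  simp [qbinom_self hq]

end QSubPow

noncomputable def qAppell (q : ℝ) (m : ℕ) (a : ℕ → ℂ) (y : ℂ) (n : ℕ) : ℂ :=
  (qfact q n : ℂ) * ∑ j ∈ range (n / m + 1), a j * (y ^ (n - m * j) / qfact q (n - m * j))

lemma sum_qbinom_mul_qsubPow_mul_qfact_div {q : ℝ} (hq : 0 < q) (k t : ℕ) (ξ y : ℂ) :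
    ∑ n ∈ range (k - t + 1), (qbinom q k n : ℂ) * qsubPow q ξ y n *
        (qfact q (k - n) * (y ^ (k - n - t) / qfact q (k - n - t))) =
      qfact q k * (ξ ^ (k - t) / qfact q (k - t)) := by
  have hcoeff (n : ℕ) : (qbinom q k n : ℂ) * qfact q (k - n) / qfact q (k - n - t) =
      qfact q k / qfact q (k - t) * qbinom q (k - t) n := by
    exact_mod_cast qbinom_mul_qfact_div_qfact hq k n t
  calc _ = (qfact q k / qfact q (k - t) : ℂ) * ∑ n ∈ range (k - t + 1),
        (qbinom q (k - t) n : ℂ) * qsubPow q ξ y n * y ^ (k - t - n) := by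
        rw [mul_sum]
        refine sum_congr rfl fun n _ => ?_
        rw [show k - t - n = k - n - t by omega]
        linear_combination qsubPow q ξ y n * y ^ (k - n - t) * hcoeff n
    _ = _ := by rw [sum_qbinom_mul_qsubPow_mul_pow hq]; ring

theorem qAppell_eq_sum_qbinom_mul_qsubPow {q : ℝ} (hq : 0 < q) (m : ℕ) (a : ℕ → ℂ)
    (k : ℕ) (ξ y : ℂ) :
    qAppell q m a ξ k =
      ∑ n ∈ range (k + 1), (qbinom q k n : ℂ) * qsubPow q ξ y n * qAppell q m a y (k - n) := by
  have hswap (n j : ℕ) : (n ∈ range (k + 1) ∧ j ∈ range ((k - n) / m + 1)) ↔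
      (n ∈ range (k - m * j + 1) ∧ j ∈ range (k / m + 1)) := by
    simp only [mem_range, Nat.lt_succ_iff]
    rcases m.eq_zero_or_pos with rfl | hm
    · simp
    · rw [Nat.le_div_iff_mul_le hm, Nat.le_div_iff_mul_le hm, mul_comm j m]
      omega
  symm
  calc ∑ n ∈ range (k + 1), (qbinom q k n : ℂ) * qsubPow q ξ y n * qAppell q m a y (k - n)
      = ∑ n ∈ range (k + 1), ∑ j ∈ range ((k - n) / m + 1), a j * ((qbinom q k n : ℂ) *
          qsubPow q ξ y n *
            (qfact q (k - n) * (y ^ (k - n - m * j) / qfact q (k - n - m * j)))) := by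
        refine sum_congr rfl fun n _ => ?_
        rw [qAppell, mul_sum, mul_sum]
        exact sum_congr rfl fun j _ => by ring
    _ = ∑ j ∈ range (k / m + 1), ∑ n ∈ range (k - m * j + 1), a j * ((qbinom q k n : ℂ) *
          qsubPow q ξ y n *
            (qfact q (k - n) * (y ^ (k - n - m * j) / qfact q (k - n - m * j)))) :=
        sum_comm' hswap
    _ = qAppell q m a ξ k := by
        rw [qAppell, mul_sum]
        refine sum_congr rfl fun j _ => ?_
        rw [← mul_sum, sum_qbinom_mul_qsubPow_mul_qfact_div hq]
        ring

theorem qLaguerre_connection_single_general (q : ℝ) (hq0 : 0 < q)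
    (m : ℕ) (k : ℕ) (x ξ y : ℂ) :
    qLag q m x ξ k =
      ∑ n ∈ Finset.range (k + 1),
        (qbinom q k n : ℂ) * qsubPow q ξ y n * qLag q m x y (k - n) := by
  have hLag (z : ℂ) (n : ℕ) : qLag q m x z n = qAppell q m
      (fun j => (q : ℂ) ^ (m * (j * (j - 1) / 2)) * x ^ j / (qfact (q ^ m) j : ℂ) ^ 2) z n := by
    rw [qLag, qAppell]
    congr 1
    exact sum_congr rfl fun j _ => by ring
  simp only [hLag]
  exact qAppell_eq_sum_qbinom_mul_qsubPow hq0 m _ k ξ y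

theorem qLaguerre_connection_single (q : ℝ) (hq0 : 0 < q) (hq1 : q < 1)
    (m : ℕ) (hm : 0 < m) (k : ℕ) (x ξ y : ℂ) :
    qLag q m x ξ k =
      ∑ n ∈ Finset.range (k + 1),
        (qbinom q k n : ℂ) * qsubPow q ξ y n * qLag q m x y (k - n) :=
  qLaguerre_connection_single_general q hq0 m k x ξ y
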